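/- Let φ : ℂ[x] → ℂ[x] be the unique ℂ-linear map sending x^n to the falling factorial (x)_n = x(x−1)⋯(x−n+1) for every n ∈ ℕ (the algebraic Mellin-type transform M*). Fix a polynomial R ∈ ℂ[X] of degree d, and let G^c = R(H^c)∘Z be the continuous operator (Z the formal derivative, H^c = x·d/dx) and G^d = R(H^d)∘Δ the discrete operator (Δp(x) = p(x+1) − p(x), H^d = −x̂∘∇ with ∇p(x) = p(x−1) − p(x)). Then φ intertwines the two operators, φ∘G^c = G^d∘φ, and consequently φ maps the continuous family onto the discrete family with the same R: φ(P_n^{c}) = P_n^{d} for all n ∈ ℕ, where P_n^{c} = e^{G^c}(x^n) and P_n^{d} = e^{G^d}((x)_n). -/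
import Mathlib


open Polynomial Finset

noncomputable section

/-- `E` is the ℂ-algebra of ℂ-linear endomorphisms of `ℂ[x]`. -/
abbrev E := Module.End ℂ (Polynomial ℂ)

/-- `Z`: the formal derivative. -/
def Zop : E := Polynomial.derivative

/-- `x̂`: multiplication by `x`. -/
def Xop : E := LinearMap.mulLeft ℂ (X : Polynomial ℂ)

/-- `H^c = x·d/dx`. -/
def Hc : E := Xop * Zop

/-- `G^c = R(H^c)∘Z`. -/
def Gc (R : Polynomial ℂ) : E := aeval Hc R * Zop

/-- `D`: the shift `p(x) ↦ p(x+1)`. -/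
def Dop : E := (aeval (X + 1 : Polynomial ℂ)).toLinearMap

/-- `D⁻¹`: the shift `p(x) ↦ p(x−1)`. -/
def Dinv : E := (aeval (X - 1 : Polynomial ℂ)).toLinearMap

/-- `Δ = D − 1`. -/
def Del : E := Dop - 1

/-- `∇ = D⁻¹ − 1`. -/
def Nab : E := Dinv - 1

/-- `H^d = −x̂∘∇`. -/
def Hd : E := -(Xop * Nab)

/-- `G^d = R(H^d)∘Δ`. -/
def Gd (R : Polynomial ℂ) : E := aeval Hd R * Del

/-- `P_n^c = e^{G^c}(x^n)`, a finite exponential sum. -/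
def Pc (R : Polynomial ℂ) (n : ℕ) : Polynomial ℂ :=
  ∑ j ∈ range (n + 1), (j.factorial : ℂ)⁻¹ • ((Gc R) ^ j) (X ^ n : Polynomial ℂ)

/-- `P_n^d = e^{G^d}((x)_n)`, a finite exponential sum. -/
def Pd (R : Polynomial ℂ) (n : ℕ) : Polynomial ℂ :=
  ∑ j ∈ range (n + 1), (j.factorial : ℂ)⁻¹ • ((Gd R) ^ j) (descPochhammer ℂ n)

lemma Hc_apply_pow (n : ℕ) : Hc (X ^ n : Polynomial ℂ) = (n : ℂ) • (X ^ n : Polynomial ℂ) := by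
  cases n with
  | zero => simp [Hc, Xop, Zop]
  | succ m =>
    simp only [Hc, Module.End.mul_apply, Xop, LinearMap.mulLeft_apply]
    rw [show Zop (X ^ (m+1) : Polynomial ℂ) = derivative (X ^ (m+1) : Polynomial ℂ) from rfl]
    rw [derivative_X_pow, smul_eq_C_mul]
    push_cast
    ring

lemma desc_ne_zero (n : ℕ) : descPochhammer ℂ n ≠ 0 :=
  (monic_descPochhammer ℂ n).ne_zero

lemma Hd_apply_desc (n : ℕ) :
    Hd (descPochhammer ℂ n) = (n : ℂ) • descPochhammer ℂ n := by
  cases n with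
  | zero => simp [Hd, Xop, Nab, Dinv]
  | succ m =>
    have h1 : Dinv (descPochhammer ℂ (m+1)) = (descPochhammer ℂ (m+1)).comp (X - 1) := by
      simp [Dinv, comp_eq_aeval]
    have h2 : (X : Polynomial ℂ) * (descPochhammer ℂ (m+1)).comp (X - 1)
        = descPochhammer ℂ (m+1) * (X - ((m:ℂ[X]) + 1)) := by
      rw [← descPochhammer_succ_left, descPochhammer_succ_right]
      push_cast
      ring
    simp only [Hd, Nab, LinearMap.neg_apply, Module.End.mul_apply, LinearMap.sub_apply,
      Module.End.one_apply, Xop, LinearMap.mulLeft_apply]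
    rw [h1, mul_sub, h2, smul_eq_C_mul]
    simp only [map_add, map_one, map_natCast]
    push_cast
    ring

lemma Del_apply_desc (n : ℕ) :
    Del (descPochhammer ℂ (n+1)) = ((n : ℂ) + 1) • descPochhammer ℂ n := by
  have h1 : Dop (descPochhammer ℂ (n+1)) = (descPochhammer ℂ (n+1)).comp (X + 1) := by
    simp [Dop, comp_eq_aeval]
  have h2 : (descPochhammer ℂ (n+1)).comp (X + 1) = (X + 1) * descPochhammer ℂ n := by
    rw [descPochhammer_succ_left, mul_comp, X_comp, comp_assoc, sub_comp, X_comp, one_comp,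
      add_sub_cancel_right, comp_X]
  simp only [Del, LinearMap.sub_apply, Module.End.one_apply]
  rw [h1, h2, descPochhammer_succ_right, smul_eq_C_mul]
  simp only [map_add, map_one, map_natCast]
  push_cast
  ring

lemma intertwine (R : Polynomial ℂ) (φ : Polynomial ℂ →ₗ[ℂ] Polynomial ℂ)
    (hφ : ∀ n : ℕ, φ (X ^ n : Polynomial ℂ) = descPochhammer ℂ n) :
    ∀ p : Polynomial ℂ, φ (Gc R p) = Gd R (φ p) := by
  intro p
  induction p using Polynomial.induction_on' with
  | add p q hp hq => simp [map_add, hp, hq]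
  | monomial n a =>
    rw [← smul_X_eq_monomial, map_smul, map_smul, map_smul, hφ, map_smul]
    congr 1
    cases n with
    | zero =>
      have hz : Gc R (1 : Polynomial ℂ) = 0 := by
        have : Zop (1 : Polynomial ℂ) = 0 := by
          show derivative (1 : Polynomial ℂ) = 0; simp
        simp [Gc, this]
      have hz' : Gd R (1 : Polynomial ℂ) = 0 := by
        have : Del (1 : Polynomial ℂ) = 0 := by simp [Del, Dop]
        simp [Gd, this]
      simp [hz, hz']
    | succ m =>
      have hev : Module.End.HasEigenvector Hc (m : ℂ) (X ^ m : Polynomial ℂ) :=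
        ⟨Module.End.mem_eigenspace_iff.2 (Hc_apply_pow m),
          pow_ne_zero m X_ne_zero⟩
      have hev' : Module.End.HasEigenvector Hd (m : ℂ) (descPochhammer ℂ m) :=
        ⟨Module.End.mem_eigenspace_iff.2 (Hd_apply_desc m), desc_ne_zero m⟩
      have hc : Gc R (X ^ (m+1) : Polynomial ℂ)
          = ((m : ℂ) + 1) • (R.eval (m : ℂ) • (X ^ m : Polynomial ℂ)) := by
        simp only [Gc, Module.End.mul_apply]
        have : Zop (X ^ (m+1) : Polynomial ℂ) = ((m : ℂ) + 1) • (X ^ m : Polynomial ℂ) := by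
          show derivative (X ^ (m+1) : Polynomial ℂ) = _
          rw [derivative_X_pow, smul_eq_C_mul]
          push_cast
          ring
        rw [this, map_smul, Module.End.aeval_apply_of_hasEigenvector hev]
      have hd : Gd R (descPochhammer ℂ (m+1))
          = ((m : ℂ) + 1) • (R.eval (m : ℂ) • descPochhammer ℂ m) := by
        simp only [Gd, Module.End.mul_apply]
        rw [Del_apply_desc, map_smul, Module.End.aeval_apply_of_hasEigenvector hev']
      rw [hc, hd, map_smul, map_smul, hφ]

/-- The Mellin-type transform `φ : x^n ↦ (x)_n` intertwines `G^c` with `G^d`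
and maps the continuous family onto the discrete family with the same `R`. -/
theorem mellin_intertwines (R : Polynomial ℂ) (d : ℕ) (hR : R.natDegree = d)
    (φ : Polynomial ℂ →ₗ[ℂ] Polynomial ℂ)
    (hφ : ∀ n : ℕ, φ (X ^ n : Polynomial ℂ) = descPochhammer ℂ n) :
    (∀ p : Polynomial ℂ, φ (Gc R p) = Gd R (φ p)) ∧
    (∀ n : ℕ, φ (Pc R n) = Pd R n) := by
  have hi := intertwine R φ hφ
  refine ⟨hi, fun n => ?_⟩
  have hpow : ∀ (j : ℕ) (p : Polynomial ℂ), φ (((Gc R) ^ j) p) = ((Gd R) ^ j) (φ p) := by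
    intro j
    induction j with
    | zero => intro p; simp
    | succ k ih =>
      intro p
      rw [pow_succ, pow_succ, Module.End.mul_apply, Module.End.mul_apply, ih, hi]
  unfold Pc Pd
  rw [map_sum]
  refine Finset.sum_congr rfl fun j _ => ?_
  rw [map_smul, hpow, hφ]


end
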